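/- arXiv:1601.05705 — 2 statements merged into one kernel-verified Lean document; each statement's English description precedes it below -/
import Mathlib

section
/- Let Q ∈ M_{n,r}(ℂ) have at least one nonzero entry and suppose every row and every column of Q contains a nonzero entry. Then there exists a line (a row or a column) of Q containing exactly one position of the normal frame of Q. -/
/-- `(i,j)` is the position of the topmost nonzero entry of column `j` of `Q`
(the first marking step in the construction of the normal frame). -/
def Topmost {n r : ℕ} (Q : Matrix (Fin n) (Fin r) ℂ) (i : Fin n) (j : Fin r) : Prop :=
  Q i j ≠ 0 ∧ ∀ i' : Fin n, i' < i → Q i' j = 0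

/-- `(i,j)` is the position of the leftmost nonzero entry of row `i` of `Q` that was not
marked in the first step (the second marking step). -/
def LeftNew {n r : ℕ} (Q : Matrix (Fin n) (Fin r) ℂ) (i : Fin n) (j : Fin r) : Prop :=
  Q i j ≠ 0 ∧ ¬ Topmost Q i j ∧ ∀ j' : Fin r, j' < j → (Q i j' = 0 ∨ Topmost Q i j')

/-- The normal frame of `Q`: the set of all positions marked in either step. -/
def NormalFrame {n r : ℕ} (Q : Matrix (Fin n) (Fin r) ℂ) : Set (Fin n × Fin r) :=
  {p | Topmost Q p.1 p.2 ∨ LeftNew Q p.1 p.2}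

lemma topmost_unique {n r : ℕ} {Q : Matrix (Fin n) (Fin r) ℂ} {i i' : Fin n} {j : Fin r}
    (h : Topmost Q i j) (h' : Topmost Q i' j) : i = i' := by
  rcases lt_trichotomy i i' with hl | he | hl
  · exact absurd (h'.2 i hl) h.1
  · exact he
  · exact absurd (h.2 i' hl) h'.1

lemma topmost_exists {n r : ℕ} (Q : Matrix (Fin n) (Fin r) ℂ) {j : Fin r}
    (h : ∃ i, Q i j ≠ 0) : ∃ i, Topmost Q i j := by
  classical
  set S : Finset (Fin n) := Finset.univ.filter (fun i => Q i j ≠ 0) with hS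
  have hne : S.Nonempty := by
    obtain ⟨i, hi⟩ := h
    exact ⟨i, by simp [hS, hi]⟩
  refine ⟨S.min' hne, ?_, ?_⟩
  · have := S.min'_mem hne
    simpa [hS] using this
  · intro i' hi'
    by_contra hz
    have : i' ∈ S := by simp [hS, hz]
    exact absurd (S.min'_le i' this) (not_le.mpr hi')

lemma leftnew_row_unique {n r : ℕ} {Q : Matrix (Fin n) (Fin r) ℂ} {i : Fin n} {j j' : Fin r}
    (h : LeftNew Q i j) (h' : LeftNew Q i j') : j = j' := by
  rcases lt_trichotomy j j' with hl | he | hl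
  · rcases h'.2.2 j hl with hz | ht
    · exact absurd hz h.1
    · exact absurd ht h.2.1
  · exact he
  · rcases h.2.2 j' hl with hz | ht
    · exact absurd hz h'.1
    · exact absurd ht h'.2.1

lemma no_leftnew_row_zero {n r : ℕ} {Q : Matrix (Fin n) (Fin r) ℂ} {i : Fin n} {j : Fin r}
    (hi : i.val = 0) (h : LeftNew Q i j) : False := by
  apply h.2.1
  refine ⟨h.1, fun i' hi' => ?_⟩
  exact absurd (hi ▸ hi') (Nat.not_lt_zero i'.val)

lemma frame_in_row {n r : ℕ} (Q : Matrix (Fin n) (Fin r) ℂ)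
    (hrow : ∀ i : Fin n, ∃ j : Fin r, Q i j ≠ 0) (i : Fin n) :
    ∃ j, (i, j) ∈ NormalFrame Q := by
  classical
  set S : Finset (Fin r) := Finset.univ.filter (fun j => Q i j ≠ 0) with hS
  have hne : S.Nonempty := by
    obtain ⟨j, hj⟩ := hrow i
    exact ⟨j, by simp [hS, hj]⟩
  set j := S.min' hne with hj
  have hQ : Q i j ≠ 0 := by
    have := S.min'_mem hne
    simpa [hS] using this
  by_cases ht : Topmost Q i j
  · exact ⟨j, Or.inl ht⟩
  · refine ⟨j, Or.inr ⟨hQ, ht, fun j' hj' => ?_⟩⟩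
    left
    by_contra hz
    have : j' ∈ S := by simp [hS, hz]
    exact absurd (S.min'_le j' this) (not_le.mpr hj')

/-- If `Q` has a nonzero entry and every row and every column of `Q` contains a nonzero
entry, then some line (a row or a column) of `Q` contains exactly one position of the
normal frame of `Q`. -/
theorem exists_line_with_unique_frame_pos (n r : ℕ) (Q : Matrix (Fin n) (Fin r) ℂ)
    (h0 : Q ≠ 0) (hrow : ∀ i : Fin n, ∃ j : Fin r, Q i j ≠ 0)
    (hcol : ∀ j : Fin r, ∃ i : Fin n, Q i j ≠ 0) :
    (∃ i : Fin n, ∃! j : Fin r, (i, j) ∈ NormalFrame Q) ∨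
    (∃ j : Fin r, ∃! i : Fin n, (i, j) ∈ NormalFrame Q) := by
  classical
  by_contra hcon
  push_neg at hcon
  obtain ⟨hR, hC⟩ := hcon
  -- n is positive
  have hn : 0 < n := by
    rcases Nat.eq_zero_or_pos n with h | h
    · subst h
      exact absurd (by funext i j; exact i.elim0) h0
    · exact h
  -- the Topmost row of each column
  choose H hH using fun j => topmost_exists Q (hcol j)
  -- Step A: every column contains a LeftNew position
  have stepA : ∀ j : Fin r, ∃ i, LeftNew Q i j := by
    intro j
    have hex : ∃ i', (i', j) ∈ NormalFrame Q ∧ i' ≠ H j := by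
      by_contra h
      push_neg at h
      exact hC j ⟨H j, Or.inl (hH j), h⟩
    obtain ⟨i', hf, hne⟩ := hex
    rcases hf with ht | hl
    · exact absurd (topmost_unique ht (hH j)) hne
    · exact ⟨i', hl⟩
  choose F hF using stepA
  have Finj : Function.Injective F := by
    intro a b hab
    exact leftnew_row_unique (hab ▸ hF a) (hF b)
  have hrn : r ≤ n := by
    simpa using Fintype.card_le_of_injective F Finj
  -- Step B: every row contains a Topmost position
  have stepB : ∀ i : Fin n, ∃ j, Topmost Q i j := by
    intro i
    obtain ⟨j0, hj0⟩ := frame_in_row Q hrow i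
    have hex : ∃ j1, (i, j1) ∈ NormalFrame Q ∧ j1 ≠ j0 := by
      by_contra h
      push_neg at h
      exact hR i ⟨j0, hj0, h⟩
    obtain ⟨j1, hj1, hne⟩ := hex
    rcases hj0 with ht | hl0
    · exact ⟨j0, ht⟩
    · rcases hj1 with ht | hl1
      · exact ⟨j1, ht⟩
      · exact absurd (leftnew_row_unique hl1 hl0) hne
  choose G hG using stepB
  have Hsurj : Function.Surjective H := by
    intro i
    exact ⟨G i, topmost_unique (hH (G i)) (hG i)⟩
  have hnr : n ≤ r := by
    simpa using Fintype.card_le_of_surjective H Hsurj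
  have Hbij : Function.Bijective H :=
    (Fintype.bijective_iff_surjective_and_card H).2 ⟨Hsurj, by simp [le_antisymm hrn hnr]⟩
  -- Row 0 has two frame positions, both Topmost, contradicting injectivity of H
  set i0 : Fin n := ⟨0, hn⟩ with hi0
  obtain ⟨j0, hj0⟩ := frame_in_row Q hrow i0
  have hex : ∃ j1, (i0, j1) ∈ NormalFrame Q ∧ j1 ≠ j0 := by
    by_contra h
    push_neg at h
    exact hR i0 ⟨j0, hj0, h⟩
  obtain ⟨j1, hj1, hne⟩ := hex
  have ht0 : Topmost Q i0 j0 := by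
    rcases hj0 with ht | hl
    · exact ht
    · exact absurd hl (fun h => no_leftnew_row_zero rfl h)
  have ht1 : Topmost Q i0 j1 := by
    rcases hj1 with ht | hl
    · exact ht
    · exact absurd hl (fun h => no_leftnew_row_zero rfl h)
  have h0' : H j0 = i0 := topmost_unique (hH j0) ht0
  have h1' : H j1 = i0 := topmost_unique (hH j1) ht1
  exact hne (Hbij.1 (h1'.trans h0'.symm))
end

section
/- Let M be a rank-d matroid on {1,…,m} with {1,…,d} a basis. If the reduced realization space R^R_ℂ(M) is path connected, then the realization space R_ℂ(M) is path connected. -/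
/-- `A` realizes the matroid `M` over `ℂ` (ground set `{1,…,m}` encoded as
`Fin d ⊕ Fin (m-d)`, where the left summand plays the role of `{1,…,d}`):
column subsets of `A` are linearly independent exactly when independent in `M`. -/
def Realizes {d k : ℕ} (M : Matroid (Fin d ⊕ Fin k))
    (A : Matrix (Fin d) (Fin d ⊕ Fin k) ℂ) : Prop :=
  M.E = Set.univ ∧ ∀ J : Set (Fin d ⊕ Fin k),
    M.Indep J ↔ LinearIndependent ℂ (fun j : J => fun i => A i (j : Fin d ⊕ Fin k))

/-!
`GL_d(ℂ)` and the torus `(ℂˣ)^(d+k)` are path connected (the complex line through `1` and `P`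
meets the singular matrices in finitely many points), and `A ↦ P * A * diagonal e` preserves
realizations, so a realization is joined inside the realization space to every point of its
orbit. Each orbit meets the reduced space: the left block of a realization is invertible because
`{1,…,d}` is a basis, and multiplying by its inverse gives `(I | Q)`. The normal frame depends only
on the zero pattern of `Q` and is a forest, so suitable row and column scalings (the row scaling
undone on the identity block by the first `d` column scalings) turn all its entries into `1`.
-/

open Matrix Polynomial

theorem IsPathConnected.of_subset_of_forall_joinedIn {X : Type*} [TopologicalSpace X]
    {s t : Set X} (ht : IsPathConnected t) (hts : t ⊆ s) (h : ∀ x ∈ s, ∃ y ∈ t, JoinedIn s x y) :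
    IsPathConnected s := by
  obtain ⟨x₀, hx₀, hjoin⟩ := ht
  refine ⟨x₀, hts hx₀, fun x hx => ?_⟩
  obtain ⟨y, hy, hxy⟩ := h x hx
  exact ((hjoin hy).mono hts).trans hxy.symm

theorem Matrix.isPathConnected_setOf_isUnit (n : Type*) [Fintype n] [DecidableEq n] :
    IsPathConnected {P : Matrix n n ℂ | IsUnit P} := by
  refine ⟨1, isUnit_one, fun P hP => ?_⟩
  let L : ℂ → Matrix n n ℂ := fun z => (1 - z) • 1 + z • P
  let p : ℂ[X] := (Matrix.of fun i j => C ((1 : Matrix n n ℂ) i j) * (1 - X) + C (P i j) * X).det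
  have hp : ∀ z, p.eval z = (L z).det := fun z => by
    rw [← coe_evalRingHom, RingHom.map_det]
    congr 1
    ext i j
    simp only [RingHom.mapMatrix_apply, map_apply, of_apply, coe_evalRingHom, eval_add, eval_mul,
      eval_C, eval_sub, eval_one, eval_X, L, add_apply, smul_apply, smul_eq_mul]
    ring
  have hp₀ : p.eval 0 ≠ 0 := by simp [hp, L]
  have hp₁ : p.eval 1 ≠ 0 := by simpa [hp, L, ← isUnit_iff_ne_zero, ← isUnit_iff_isUnit_det]
  have hU : IsPathConnected {z : ℂ | p.IsRoot z}ᶜ :=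
    (finite_setOfPred_isRoot fun h => hp₁ (by simp [h])).countable
      |>.isPathConnected_compl_of_one_lt_rank
      (by simp [Complex.rank_real_complex])
  have hL : Continuous L := by fun_prop
  convert ((hU.joinedIn 0 hp₀ 1 hp₁).map hL).mono ?_ using 1
  · simp [L]
  · simp [L]
  · rintro _ ⟨z, hz, rfl⟩
    simpa [isUnit_iff_isUnit_det, isUnit_iff_ne_zero, ← hp] using hz

theorem isPathConnected_setOf_forall_ne_zero (ι : Type*) :
    IsPathConnected {e : ι → ℂ | ∀ x, e x ≠ 0} := by
  simpa [Set.pi, Set.mem_compl_singleton_iff] using IsPathConnected.pi fun _ : ι =>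
    isPathConnected_compl_singleton_of_one_lt_rank (by simp [Complex.rank_real_complex]) (0 : ℂ)

section

variable {n r : ℕ} {Q Q' : Matrix (Fin n) (Fin r) ℂ} {i i' : Fin n} {j j' : Fin r}

theorem Topmost.unique (h : Topmost Q i j) (h' : Topmost Q i' j) : i = i' :=
  le_antisymm (not_lt.1 fun hlt => h'.1 (h.2 i' hlt)) (not_lt.1 fun hlt => h.1 (h'.2 i hlt))

theorem LeftNew.unique (h : LeftNew Q i j) (h' : LeftNew Q i j') : j = j' :=
  le_antisymm (not_lt.1 fun hlt => (h.2.2 j' hlt).elim h'.1 h'.2.1)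
    (not_lt.1 fun hlt => (h'.2.2 j hlt).elim h.1 h.2.1)

theorem exists_topmost_of_ne_zero (h : Q i j ≠ 0) : ∃ i', Topmost Q i' j := by
  obtain ⟨i', hi', hmin⟩ := wellFounded_lt.has_min {i | Q i j ≠ 0} ⟨i, h⟩
  exact ⟨i', hi', fun i'' hlt => not_not.1 fun hne => hmin i'' hne hlt⟩

theorem LeftNew.exists_topmost (h : LeftNew Q i j) : ∃ i', Topmost Q i' j :=
  exists_topmost_of_ne_zero h.1

theorem LeftNew.lt_of_topmost (h : LeftNew Q i j) (ht : Topmost Q i' j) : i' < i :=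
  lt_of_not_ge fun hle =>
    hle.lt_or_eq.elim (fun hlt => h.1 (ht.2 i hlt)) fun heq => h.2.1 (heq ▸ ht)

theorem topmost_iff_of_eq_zero_iff (hQ : ∀ i j, Q' i j = 0 ↔ Q i j = 0) :
    Topmost Q' i j ↔ Topmost Q i j := by
  simp only [Topmost, ne_eq, hQ]

theorem leftNew_iff_of_eq_zero_iff (hQ : ∀ i j, Q' i j = 0 ↔ Q i j = 0) :
    LeftNew Q' i j ↔ LeftNew Q i j := by
  simp only [LeftNew, ne_eq, hQ, topmost_iff_of_eq_zero_iff hQ]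

theorem normalFrame_eq_of_eq_zero_iff (hQ : ∀ i j, Q' i j = 0 ↔ Q i j = 0) :
    NormalFrame Q' = NormalFrame Q := by
  ext
  simp only [NormalFrame, Set.mem_ofPred_eq, topmost_iff_of_eq_zero_iff hQ,
    leftNew_iff_of_eq_zero_iff hQ]

theorem normalFrame_diagonal_mul_mul_diagonal {rv : Fin n → ℂ} {cv : Fin r → ℂ}
    (hrv : ∀ i, rv i ≠ 0) (hcv : ∀ j, cv j ≠ 0) :
    NormalFrame (diagonal rv * Q * diagonal cv) = NormalFrame Q :=
  normalFrame_eq_of_eq_zero_iff fun i j => by simp [Matrix.mul_diagonal, hrv i, hcv j]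

namespace NormalFrame

/- Rows are scaled top to bottom: a `LeftNew` entry of row `i` lies in a column whose topmost entry
sits in an earlier row `i'`, and the factor of row `i` gives both entries the same scaled value. -/
open Classical in
noncomputable def rowScale (Q : Matrix (Fin n) (Fin r) ℂ) (i : Fin n) : ℂ :=
  if h : ∃ j, LeftNew Q i j then
    Q h.choose_spec.exists_topmost.choose h.choose / Q i h.choose *
      rowScale Q h.choose_spec.exists_topmost.choose
  else 1
termination_by i
decreasing_by exact h.choose_spec.lt_of_topmost h.choose_spec.exists_topmost.choose_spec

theorem rowScale_of_leftNew (h : LeftNew Q i j) (ht : Topmost Q i' j) :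
    rowScale Q i = Q i' j / Q i j * rowScale Q i' := by
  have hex : ∃ j, LeftNew Q i j := ⟨j, h⟩
  rw [rowScale, dif_pos hex]
  have hj : hex.choose = j := hex.choose_spec.unique h
  have hi' : hex.choose_spec.exists_topmost.choose = i' :=
    hex.choose_spec.exists_topmost.choose_spec.unique (hj ▸ ht)
  rw [hi', hj]

theorem rowScale_ne_zero (Q : Matrix (Fin n) (Fin r) ℂ) (i : Fin n) : rowScale Q i ≠ 0 := by
  induction i using WellFoundedLT.induction with
  | _ i ih =>
    by_cases h : ∃ j, LeftNew Q i j
    · obtain ⟨j, hj⟩ := h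
      obtain ⟨i', ht⟩ := hj.exists_topmost
      rw [rowScale_of_leftNew hj ht]
      exact mul_ne_zero (div_ne_zero ht.1 hj.1) (ih i' (hj.lt_of_topmost ht))
    · rw [rowScale, dif_neg h]
      exact one_ne_zero

open Classical in
noncomputable def colScale (Q : Matrix (Fin n) (Fin r) ℂ) (j : Fin r) : ℂ :=
  if h : ∃ i, Topmost Q i j then (rowScale Q h.choose * Q h.choose j)⁻¹ else 1

theorem colScale_of_topmost (h : Topmost Q i j) : colScale Q j = (rowScale Q i * Q i j)⁻¹ := by
  have hex : ∃ i, Topmost Q i j := ⟨i, h⟩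
  rw [colScale, dif_pos hex, hex.choose_spec.unique h]

theorem colScale_ne_zero (Q : Matrix (Fin n) (Fin r) ℂ) (j : Fin r) : colScale Q j ≠ 0 := by
  rw [colScale]
  split_ifs with h
  · exact inv_ne_zero (mul_ne_zero (rowScale_ne_zero Q _) h.choose_spec.1)
  · exact one_ne_zero

theorem rowScale_mul_mul_colScale (h : (i, j) ∈ NormalFrame Q) :
    rowScale Q i * Q i j * colScale Q j = 1 := by
  rcases h with ht | hl
  · rw [colScale_of_topmost ht]
    exact mul_inv_cancel₀ (mul_ne_zero (rowScale_ne_zero Q i) ht.1)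
  · obtain ⟨i', ht⟩ := hl.exists_topmost
    rw [rowScale_of_leftNew hl ht, colScale_of_topmost ht]
    field_simp [rowScale_ne_zero Q i', ht.1, hl.1]

theorem exists_diagonal_scaling_eq_one (Q : Matrix (Fin n) (Fin r) ℂ) :
    ∃ (rv : Fin n → ℂ) (cv : Fin r → ℂ), (∀ i, rv i ≠ 0) ∧ (∀ j, cv j ≠ 0) ∧
      ∀ p ∈ NormalFrame (diagonal rv * Q * diagonal cv),
        (diagonal rv * Q * diagonal cv) p.1 p.2 = 1 := by
  refine ⟨rowScale Q, colScale Q, rowScale_ne_zero Q, colScale_ne_zero Q, fun p hp => ?_⟩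
  rw [normalFrame_diagonal_mul_mul_diagonal (rowScale_ne_zero Q) (colScale_ne_zero Q)] at hp
  simpa [Matrix.mul_diagonal] using rowScale_mul_mul_colScale hp

end NormalFrame

end

section

variable {d k : ℕ} {M : Matroid (Fin d ⊕ Fin k)} {A : Matrix (Fin d) (Fin d ⊕ Fin k) ℂ}

theorem Realizes.mul_diagonal (hA : Realizes M A) {P : Matrix (Fin d) (Fin d) ℂ} (hP : IsUnit P)
    {e : Fin d ⊕ Fin k → ℂ} (he : ∀ x, e x ≠ 0) : Realizes M (P * A * diagonal e) := by
  refine ⟨hA.1, fun J => (hA.2 J).trans ?_⟩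
  have hcols : (fun x : J => fun i => (P * A * diagonal e) i x) =
      (fun x : J => Units.mk0 (e x) (he x)) • (P.mulVecLin ∘ fun x : J => fun i => A i x) := by
    ext x i
    rw [Matrix.mul_diagonal]
    simp [Units.smul_def, mulVec, dotProduct, mul_apply, mul_comm]
  rw [hcols, LinearIndependent.units_smul_iff,
    LinearMap.linearIndependent_iff _
      (LinearMap.ker_eq_bot.mpr (mulVec_injective_iff_isUnit.mpr hP))]

theorem Realizes.joinedIn_mul_diagonal (hA : Realizes M A) {P : Matrix (Fin d) (Fin d) ℂ}
    (hP : IsUnit P) {e : Fin d ⊕ Fin k → ℂ} (he : ∀ x, e x ≠ 0) :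
    JoinedIn {B | Realizes M B} A (P * A * diagonal e) := by
  have hS := (isPathConnected_setOf_isUnit (Fin d)).prod
    (isPathConnected_setOf_forall_ne_zero (Fin d ⊕ Fin k))
  have hf : Continuous fun Pe : Matrix (Fin d) (Fin d) ℂ × (Fin d ⊕ Fin k → ℂ) =>
      Pe.1 * A * diagonal Pe.2 := by fun_prop
  convert ((hS.joinedIn (1, 1) ⟨isUnit_one, fun _ => one_ne_zero⟩ (P, e) ⟨hP, he⟩).map hf).mono ?_
  · simp
  · rintro _ ⟨⟨Q, c⟩, ⟨hQ, hc⟩, rfl⟩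
    exact hA.mul_diagonal hQ hc

theorem Realizes.isUnit_toCols₁ (hbase : M.IsBase (Set.range Sum.inl)) (hA : Realizes M A) :
    IsUnit A.toCols₁ := by
  rw [← linearIndependent_cols_iff_isUnit]
  exact ((hA.2 _).mp hbase.indep).comp (fun j => ⟨Sum.inl j, j, rfl⟩)
    fun _ _ h => Sum.inl_injective (congrArg Subtype.val h)

theorem Realizes.exists_mul_diagonal_eq_fromCols_one (hbase : M.IsBase (Set.range Sum.inl))
    (hA : Realizes M A) :
    ∃ (P : Matrix (Fin d) (Fin d) ℂ) (e : Fin d ⊕ Fin k → ℂ), IsUnit P ∧ (∀ x, e x ≠ 0) ∧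
      ∃ At : Matrix (Fin d) (Fin k) ℂ, P * A * diagonal e = fromCols 1 At ∧
        ∀ p ∈ NormalFrame At, At p.1 p.2 = 1 := by
  have hB := hA.isUnit_toCols₁ hbase
  obtain ⟨rv, cv, hrv, hcv, hframe⟩ :=
    NormalFrame.exists_diagonal_scaling_eq_one (A.toCols₁⁻¹ * A.toCols₂)
  refine ⟨diagonal rv * A.toCols₁⁻¹, Sum.elim rv⁻¹ cv, ?_, ?_, _, ?_, hframe⟩
  · exact (isUnit_diagonal.mpr (Pi.isUnit_iff.mpr fun i => (hrv i).isUnit)).mul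
      (isUnit_nonsing_inv_iff.mpr hB)
  · rintro (i | j)
    · exact inv_ne_zero (hrv i)
    · exact hcv j
  · rw [← fromCols_toCols A, ← fromBlocks_diagonal, mul_fromCols, fromCols_mul_fromBlocks]
    simp only [toCols₁_fromCols, toCols₂_fromCols, Matrix.mul_zero, add_zero, zero_add,
      Matrix.mul_assoc, nonsing_inv_mul _ ((isUnit_iff_isUnit_det _).mp hB), Matrix.mul_one]
    rw [diagonal_mul_diagonal, ← diagonal_one]
    simp_rw [Pi.inv_apply, mul_inv_cancel₀ (hrv _)]

end

/-- If the reduced realization space of `M` is path connected, then so is the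
realization space of `M` (for `M` a matroid on `{1,…,m}` with `{1,…,d}` a basis). -/
theorem realization_pathConnected_of_reduced (d k : ℕ)
    (M : Matroid (Fin d ⊕ Fin k)) (hbase : M.IsBase (Set.range Sum.inl))
    (hred : IsPathConnected {A : Matrix (Fin d) (Fin d ⊕ Fin k) ℂ | Realizes M A ∧
      ∃ At : Matrix (Fin d) (Fin k) ℂ, A = Matrix.fromCols 1 At ∧
        ∀ p ∈ NormalFrame At, At p.1 p.2 = 1}) :
    IsPathConnected {A : Matrix (Fin d) (Fin d ⊕ Fin k) ℂ | Realizes M A} := by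
  refine hred.of_subset_of_forall_joinedIn (fun _ hA => hA.1) fun A hA => ?_
  obtain ⟨P, e, hP, he, At, hAt, hframe⟩ := hA.exists_mul_diagonal_eq_fromCols_one hbase
  exact ⟨P * A * diagonal e, ⟨hA.mul_diagonal hP he, At, hAt, hframe⟩,
    hA.joinedIn_mul_diagonal hP he⟩
end
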